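/- Let m₁ = m^{a₁,b₁,c₁} and m₂ = m^{a₂,b₂,c₂} be two quasi-Speh multisegments with defining segments Δ_{k₁} ≺ ⋯ ≺ Δ₁ and Δ'_{k₂} ≺ ⋯ ≺ Δ'₁ respectively, and suppose (a₂,b₂) ⪯ (a₁,b₁) in the total preorder (a₂+b₂ < a₁+b₁, or a₂+b₂ = a₁+b₁ and a₂ ≤ a₁). Define X = {(i,j) : Δᵢ ≺ Δ'ⱼ} and Y = {(i,j) : Δᵢ ≺ →Δ'ⱼ}, where →[α,β] = [α+1,β+1], and say (i₁,j₁) ↔ (i₂,j₂) if either (i₁ = i₂ and j₂ = j₁+1) or (j₁ = j₂ and i₂ = i₁-1). Then there exists an injective function f : X → Y with x ↔ f(x) for all x ∈ X. -/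

import Mathlib

/-- `[α₁,β₁] ≺ [α₂,β₂]` iff `α₁ ≤ α₂ - 1 ≤ β₁ < β₂` with integer differences. -/
def QSegPrec (Δ₁ Δ₂ : ℚ × ℚ) : Prop :=
  Δ₁.1 ≤ Δ₂.1 - 1 ∧ Δ₂.1 - 1 ≤ Δ₁.2 ∧ Δ₁.2 < Δ₂.2 ∧ ∃ n : ℤ, Δ₂.1 - Δ₁.1 = (n : ℚ)

/-- The `i`-th defining segment of the quasi-Speh multisegment `m^{a,b,c}`. -/
def quasiSpehSeg (a b c i : ℤ) : ℚ × ℚ :=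
  if i = 1 then (((b : ℚ) + a) / 2 - c, ((b : ℚ) + a) / 2 - 1)
  else (((b : ℚ) - a) / 2 + 1 - i, ((b : ℚ) + a) / 2 - i)

/-- The shift `→[α,β] = [α+1,β+1]`. -/
def shiftSeg (Δ : ℚ × ℚ) : ℚ × ℚ := (Δ.1 + 1, Δ.2 + 1)

/-- The edge relation of the Lapid–Mínguez bipartite graph. -/
def LMEdge (p q : ℤ × ℤ) : Prop :=
  (p.1 = q.1 ∧ q.2 = p.2 + 1) ∨ (p.2 = q.2 ∧ q.1 = p.1 - 1)

/-!
Send `(i, j)` to `(i - 1, j)`. Away from the first row this works because `Δᵢ₋₁ = →Δᵢ` and `≺` is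
shift-invariant; comparing right endpoints (and their parity) forces `j < i`, with
`a₁ + b₁ = a₂ + b₂` on the diagonal `i = j + 1`. The only failure is `(2, 1) ↦ (1, 1)`, which needs
`c₂ ≤ c₁`; when `c₁ < c₂` the whole diagonal is sent to the right instead, `(j + 1, j) ↦ (j + 1, j + 1)`,
whose images lie on the main diagonal and so avoid all the others.
-/

theorem QSegPrec.shift {Δ Δ' : ℚ × ℚ} (h : QSegPrec Δ Δ') : QSegPrec (shiftSeg Δ) (shiftSeg Δ') := by
  obtain ⟨h₁, h₂, h₃, n, hn⟩ := h
  simp only [QSegPrec, shiftSeg]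
  exact ⟨by linarith, by linarith, by linarith, n, by linarith⟩

section QuasiSpeh

theorem quasiSpehSeg_snd (a b c i : ℤ) : (quasiSpehSeg a b c i).2 = ((b : ℚ) + a) / 2 - i := by
  unfold quasiSpehSeg
  split_ifs with hi
  · simp [hi]
  · rfl

theorem exists_quasiSpehSeg_fst (a b c i : ℤ) :
    ∃ k : ℤ, (quasiSpehSeg a b c i).1 = ((b : ℚ) + a) / 2 - k := by
  unfold quasiSpehSeg
  split_ifs
  · exact ⟨c, rfl⟩
  · exact ⟨a - 1 + i, by push_cast; ring⟩

theorem quasiSpehSeg_sub_one {a b c i : ℤ} (hi : 3 ≤ i) :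
    quasiSpehSeg a b c (i - 1) = shiftSeg (quasiSpehSeg a b c i) := by
  simp only [quasiSpehSeg, shiftSeg, if_neg (show i - 1 ≠ 1 by omega),
    if_neg (show i ≠ 1 by omega), Prod.mk.injEq]
  push_cast
  constructor <;> ring

variable {a₁ b₁ c₁ a₂ b₂ c₂ i j : ℤ}

theorem QSegPrec.exists_quasiSpehSeg_sum_sub
    (h : QSegPrec (quasiSpehSeg a₁ b₁ c₁ i) (quasiSpehSeg a₂ b₂ c₂ j)) :
    ∃ n : ℤ, a₁ + b₁ - (a₂ + b₂) = 2 * n ∧ n < i - j := by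
  obtain ⟨-, -, hlt, m, hm⟩ := h
  obtain ⟨k₁, hk₁⟩ := exists_quasiSpehSeg_fst a₁ b₁ c₁ i
  obtain ⟨k₂, hk₂⟩ := exists_quasiSpehSeg_fst a₂ b₂ c₂ j
  rw [quasiSpehSeg_snd, quasiSpehSeg_snd] at hlt
  rw [hk₁, hk₂] at hm
  refine ⟨k₁ - k₂ - m, ?_, ?_⟩
  · exact_mod_cast (by push_cast; linarith :
      ((a₁ + b₁ - (a₂ + b₂) : ℤ) : ℚ) = ((2 * (k₁ - k₂ - m) : ℤ) : ℚ))
  · exact_mod_cast (by push_cast; linarith : ((k₁ - k₂ - m : ℤ) : ℚ) < ((i - j : ℤ) : ℚ))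

theorem quasiSpehSeg_prec_shift_self (hsum : a₁ + b₁ = a₂ + b₂) (ha : a₂ ≤ a₁) (ha₂ : 0 < a₂)
    (hi : 2 ≤ i) :
    QSegPrec (quasiSpehSeg a₁ b₁ c₁ i) (shiftSeg (quasiSpehSeg a₂ b₂ c₂ i)) := by
  have hsumQ : (a₁ : ℚ) + b₁ = a₂ + b₂ := by exact_mod_cast hsum
  have haQ : (a₂ : ℚ) ≤ a₁ := by exact_mod_cast ha
  have ha₂Q : (1 : ℚ) ≤ a₂ := by exact_mod_cast ha₂
  simp only [QSegPrec, quasiSpehSeg, shiftSeg, if_neg (show i ≠ 1 by omega)]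
  exact ⟨by linarith, by linarith, by linarith, a₁ - a₂ + 1, by push_cast; linarith⟩

theorem QSegPrec.quasiSpehSeg_one_prec_shift_one (hsum : a₁ + b₁ = a₂ + b₂) (hc : c₂ ≤ c₁)
    (h : QSegPrec (quasiSpehSeg a₁ b₁ c₁ 2) (quasiSpehSeg a₂ b₂ c₂ 1)) :
    QSegPrec (quasiSpehSeg a₁ b₁ c₁ 1) (shiftSeg (quasiSpehSeg a₂ b₂ c₂ 1)) := by
  have hsumQ : (a₁ : ℚ) + b₁ = a₂ + b₂ := by exact_mod_cast hsum
  have hcQ : (c₂ : ℚ) ≤ c₁ := by exact_mod_cast hc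
  obtain ⟨-, hc₂, -⟩ := h
  simp only [quasiSpehSeg, QSegPrec, shiftSeg, ↓reduceIte, OfNat.ofNat_ne_one, Int.cast_ofNat]
    at hc₂ ⊢
  exact ⟨by linarith, by linarith, by linarith, c₁ - c₂ + 1, by push_cast; linarith⟩

def quasiSpehMatch (c₁ c₂ : ℤ) (p : ℤ × ℤ) : ℤ × ℤ :=
  if p.1 = p.2 + 1 ∧ c₁ < c₂ then (p.1, p.2 + 1) else (p.1 - 1, p.2)

theorem quasiSpehMatch_injective (c₁ c₂ : ℤ) : Function.Injective (quasiSpehMatch c₁ c₂) := by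
  rintro ⟨i, j⟩ ⟨i', j'⟩ h
  simp only [quasiSpehMatch] at h
  split_ifs at h <;> simp only [Prod.mk.injEq] at h ⊢ <;> omega

theorem lmEdge_quasiSpehMatch (c₁ c₂ : ℤ) (p : ℤ × ℤ) : LMEdge p (quasiSpehMatch c₁ c₂ p) := by
  unfold quasiSpehMatch
  split_ifs
  · exact Or.inl ⟨rfl, rfl⟩
  · exact Or.inr ⟨rfl, rfl⟩

theorem mapsTo_quasiSpehMatch (ha₂ : 0 < a₂)
    (hord : a₂ + b₂ < a₁ + b₁ ∨ (a₂ + b₂ = a₁ + b₁ ∧ a₂ ≤ a₁)) :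
    Set.MapsTo (quasiSpehMatch c₁ c₂)
      {p : ℤ × ℤ | 1 ≤ p.1 ∧ p.1 ≤ b₁ ∧ 1 ≤ p.2 ∧ p.2 ≤ b₂ ∧
        QSegPrec (quasiSpehSeg a₁ b₁ c₁ p.1) (quasiSpehSeg a₂ b₂ c₂ p.2)}
      {p : ℤ × ℤ | 1 ≤ p.1 ∧ p.1 ≤ b₁ ∧ 1 ≤ p.2 ∧ p.2 ≤ b₂ ∧
        QSegPrec (quasiSpehSeg a₁ b₁ c₁ p.1) (shiftSeg (quasiSpehSeg a₂ b₂ c₂ p.2))} := by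
  rintro ⟨i, j⟩ ⟨hi₁, hib, hj₁, hjb, hprec⟩
  obtain ⟨n, hn, hnij⟩ := hprec.exists_quasiSpehSeg_sum_sub
  have hdiag_sum : i = j + 1 → a₁ + b₁ = a₂ + b₂ := fun _ ↦ by omega
  simp only [quasiSpehMatch, Set.mem_ofPred_eq]
  split_ifs with hdiag
  · obtain ⟨rfl, -⟩ := hdiag
    have hsum := hdiag_sum rfl
    refine ⟨hi₁, hib, by omega, by omega, ?_⟩
    exact quasiSpehSeg_prec_shift_self hsum (by omega) ha₂ (by omega)
  · refine ⟨by omega, by omega, hj₁, hjb, ?_⟩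
    obtain hi | rfl : 3 ≤ i ∨ i = 2 := by omega
    · rw [quasiSpehSeg_sub_one hi]
      exact hprec.shift
    · obtain rfl : j = 1 := by omega
      exact hprec.quasiSpehSeg_one_prec_shift_one (hdiag_sum rfl) (by omega)

end QuasiSpeh

theorem quasiSpeh_matching_general (a₁ b₁ c₁ a₂ b₂ c₂ : ℤ)
    (ha₂ : 0 < a₂)
    (hord : a₂ + b₂ < a₁ + b₁ ∨ (a₂ + b₂ = a₁ + b₁ ∧ a₂ ≤ a₁))
    (X Y : Set (ℤ × ℤ))
    (hX : X = {p : ℤ × ℤ | 1 ≤ p.1 ∧ p.1 ≤ b₁ ∧ 1 ≤ p.2 ∧ p.2 ≤ b₂ ∧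
      QSegPrec (quasiSpehSeg a₁ b₁ c₁ p.1) (quasiSpehSeg a₂ b₂ c₂ p.2)})
    (hY : Y = {p : ℤ × ℤ | 1 ≤ p.1 ∧ p.1 ≤ b₁ ∧ 1 ≤ p.2 ∧ p.2 ≤ b₂ ∧
      QSegPrec (quasiSpehSeg a₁ b₁ c₁ p.1) (shiftSeg (quasiSpehSeg a₂ b₂ c₂ p.2))}) :
    ∃ f : X → Y, Function.Injective f ∧ ∀ x : X, LMEdge (x : ℤ × ℤ) ((f x : ℤ × ℤ)) := by
  subst hX hY
  have hmaps := mapsTo_quasiSpehMatch (c₁ := c₁) (c₂ := c₂) ha₂ hord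
  exact ⟨hmaps.restrict, hmaps.restrict_inj.2 (quasiSpehMatch_injective c₁ c₂).injOn,
    fun x ↦ lmEdge_quasiSpehMatch c₁ c₂ x⟩

/-- For quasi-Speh multisegments `m₁ = m^{a₁,b₁,c₁}` and `m₂ = m^{a₂,b₂,c₂}` with
`(a₂,b₂) ⪯ (a₁,b₁)`, there is an injective matching function `f : X → Y` for the
Lapid–Mínguez bipartite graph. -/
theorem quasiSpeh_matching (a₁ b₁ c₁ a₂ b₂ c₂ : ℤ)
    (ha₁ : 0 < a₁) (hb₁ : 0 < b₁) (hc₁0 : 0 ≤ c₁) (hc₁a : c₁ ≤ a₁)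
    (ha₂ : 0 < a₂) (hb₂ : 0 < b₂) (hc₂0 : 0 ≤ c₂) (hc₂a : c₂ ≤ a₂)
    (hord : a₂ + b₂ < a₁ + b₁ ∨ (a₂ + b₂ = a₁ + b₁ ∧ a₂ ≤ a₁))
    (X Y : Set (ℤ × ℤ))
    (hX : X = {p : ℤ × ℤ | 1 ≤ p.1 ∧ p.1 ≤ b₁ ∧ 1 ≤ p.2 ∧ p.2 ≤ b₂ ∧
      QSegPrec (quasiSpehSeg a₁ b₁ c₁ p.1) (quasiSpehSeg a₂ b₂ c₂ p.2)})
    (hY : Y = {p : ℤ × ℤ | 1 ≤ p.1 ∧ p.1 ≤ b₁ ∧ 1 ≤ p.2 ∧ p.2 ≤ b₂ ∧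
      QSegPrec (quasiSpehSeg a₁ b₁ c₁ p.1) (shiftSeg (quasiSpehSeg a₂ b₂ c₂ p.2))}) :
    ∃ f : X → Y, Function.Injective f ∧ ∀ x : X, LMEdge (x : ℤ × ℤ) ((f x : ℤ × ℤ)) :=
  quasiSpeh_matching_general a₁ b₁ c₁ a₂ b₂ c₂ ha₂ hord X Y hX hY
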